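/- Let p, q, r be integers with p ≠ 0, gcd(p, q) = 1, |p| ≥ q ≥ 1, r ≥ 2, r odd and q even, and set n = qr, m = |p|·r. Write x ∈ ℤ^n as the concatenation of q blocks b_1, …, b_q ∈ ℤ^r (so b_j = (x_{(j−1)r+1}, …, x_{jr})). Then T_n^m(x) = x if and only if b_j = b_1 for every odd index j and b_j = τ(b_1) for every even index j (with b_1 ∈ ℤ^r arbitrary). -/

import Mathlib

/-- The twist map `T_n : ℤ^n → ℤ^n`,
`T_n(x_1,…,x_n) = (2x_1 − x_2, 2x_1 − x_3, …, 2x_1 − x_n, x_1)` (0-indexed). -/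
def twist (n : ℕ) (x : Fin n → ℤ) : Fin n → ℤ :=
  fun i => if h : (i : ℕ) + 1 < n then 2 * x ⟨0, i.pos⟩ - x ⟨(i : ℕ) + 1, h⟩ else x ⟨0, i.pos⟩

/-- The `j`-th block (of length `R`) of a vector `x ∈ ℤ^{QR}`. -/
def blk (Q R : ℕ) (x : Fin (Q * R) → ℤ) (j : Fin Q) (i : Fin R) : ℤ :=
  x ⟨(j : ℕ) * R + (i : ℕ), by
    calc (j : ℕ) * R + (i : ℕ) < (j : ℕ) * R + R := Nat.add_lt_add_left i.2 _
      _ = ((j : ℕ) + 1) * R := (Nat.succ_mul _ _).symm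
      _ ≤ Q * R := Nat.mul_le_mul_right R j.2⟩

/-- `Δ(a) = a_1 − a_2 + a_3 − ⋯ + (−1)^{r+1} a_r` (0-indexed signs `(−1)^i`). -/
def delta (R : ℕ) (a : Fin R → ℤ) : ℤ := ∑ i : Fin R, (-1 : ℤ) ^ (i : ℕ) * a i

/-- `τ(a) = (−a_i + 2Δ(a))_i`. -/
def tau (R : ℕ) (a : Fin R → ℤ) : Fin R → ℤ := fun i => -a i + 2 * delta R a

/-!
Reading indices modulo `n = QR`, `T(x)_i = 2 x_0 - x_{i+1}`, hence
`T^k(x)_i = (-1)^k x_{i+k} + 2 ∑_{l<k} (-1)^l x_l`, and for odd `m = PR` the fixed points of `T^m`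
are the `x` with `x_t + x_{t+m} = c` for all `t`, where `c = 2 ∑_{l<m} (-1)^l x_l`.
Such an `x` has period `2m`, hence period `gcd(n, 2m) = 2R` (as `Q` is even and prime to `P`);
since `m ≡ R (mod 2R)`, the condition becomes `x_t + x_{t+R} = c`, i.e. the blocks alternate
between `b` and `c - b`. Summing the alternating series block by block then forces `c = 2Δ(b)`,
so that `c - b = τ(b)`.
-/

open Finset Function

theorem Function.Periodic.of_add_add_eq {G β : Type*} [AddSemigroup G] [AddCommGroup β]
    {f : G → β} {g : G} {c : β} (h : ∀ t, f t + f (t + g) = c) : Periodic f (g + g) := by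
  intro t
  have h2 := h (t + g)
  rw [← h t, add_comm (f t)] at h2
  rw [← add_assoc]
  exact add_left_cancel h2

theorem sum_range_mul_neg_one_pow_mul {R : ℕ} (hR : Odd R) {f : ℕ → ℤ} {d : ℤ}
    (h : ∀ l, f l + f (l + R) = d) (k : ℕ) :
    ∑ l ∈ range (k * R), (-1) ^ l * f l = k * ∑ l ∈ range R, (-1) ^ l * f l - (k / 2 : ℕ) * d := by
  induction k with
  | zero => simp
  | succ k ih =>
    have hstep : ∀ l, (-1 : ℤ) ^ (R + l) * f (R + l) = (-1) ^ l * f l - (-1) ^ l * d := by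
      intro l
      rw [add_comm R l, pow_add, hR.neg_one_pow, show f (l + R) = d - f l by linarith [h l]]
      ring
    rw [Nat.succ_mul, add_comm, sum_range_add]
    simp only [hstep, sum_sub_distrib, ← sum_mul, neg_one_geom_sum, ih, Nat.even_mul,
      Nat.not_even_iff_odd.2 hR, or_false]
    rcases Nat.even_or_odd' k with ⟨v, rfl | rfl⟩
    · rw [if_pos (even_two_mul v), show 2 * v / 2 = v by omega, show (2 * v + 1) / 2 = v by omega]
      push_cast
      ring
    · rw [if_neg (Nat.not_even_iff_odd.2 (odd_two_mul_add_one v)),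
        show (2 * v + 1 + 1) / 2 = v + 1 by omega, show (2 * v + 1) / 2 = v by omega]
      push_cast
      ring

theorem two_mul_sum_range_mul_eq_iff {P R : ℕ} (hP : Odd P) (hR : Odd R) {f : ℕ → ℤ} {d : ℤ}
    (h : ∀ l, f l + f (l + R) = d) :
    2 * ∑ l ∈ range (P * R), (-1) ^ l * f l = d ↔ d = 2 * ∑ l ∈ range R, (-1) ^ l * f l := by
  rw [sum_range_mul_neg_one_pow_mul hR h]
  obtain ⟨u, rfl⟩ := hP
  rw [show (2 * u + 1) / 2 = u by omega]
  have hu : (2 * u + 1 : ℤ) ≠ 0 := by positivity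
  constructor
  · intro h'
    refine mul_left_cancel₀ hu ?_
    push_cast at h'
    linear_combination -h'
  · intro h'
    rw [h']
    push_cast
    ring

section CyclicIndices

open Fin.CommRing

section

variable {n : ℕ} [NeZero n]

theorem twist_apply (x : Fin n → ℤ) (i : Fin n) : twist n x i = 2 * x 0 - x (i + 1) := by
  unfold twist
  split_ifs with h
  · congr 3
    rw [Nat.add_mod_mod, Nat.mod_eq_of_lt h]
  · have hwrap : i + 1 = 0 := by
      ext
      rw [Fin.val_add, Fin.val_one', Nat.add_mod_mod, show (i : ℕ) + 1 = n by omega, Nat.mod_self]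
      rfl
    rw [hwrap]
    change x 0 = 2 * x 0 - x 0
    ring

theorem iterate_twist_apply (x : Fin n → ℤ) (k : ℕ) (i : Fin n) :
    (twist n)^[k] x i = (-1) ^ k * x (i + k) + 2 * ∑ l ∈ range k, (-1) ^ l * x l := by
  induction k generalizing i with
  | zero => simp
  | succ k ih =>
    rw [iterate_succ_apply', twist_apply, ih, ih, sum_range_succ, zero_add,
      show i + 1 + (k : Fin n) = i + (k + 1 : ℕ) by push_cast; ring]
    ring

theorem iterate_twist_eq_self_iff {k : ℕ} (hk : Odd k) (x : Fin n → ℤ) :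
    (twist n)^[k] x = x ↔ ∀ i, x i + x (i + k) = 2 * ∑ l ∈ range k, (-1) ^ l * x l := by
  simp only [funext_iff, iterate_twist_apply, hk.neg_one_pow]
  refine forall_congr' fun i => ?_
  constructor <;> intro h <;> linarith

theorem Function.Periodic.natCast_gcd {α : Type*} {f : Fin n → α} {k : ℕ}
    (h : Periodic f (k : Fin n)) : Periodic f (n.gcd k : Fin n) := by
  have hgcd : ((n.gcd k : ℕ) : Fin n) = (n.gcdB k : Fin n) * k := by
    rw [← Int.cast_natCast, Nat.gcd_eq_gcd_ab]
    push_cast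
    rw [Fin.natCast_self, zero_mul, zero_add, mul_comm]
  rw [hgcd]
  exact h.int_mul _

theorem natCast_mul_add_eq_ite {R : ℕ} {x : Fin n → ℤ} {d : ℤ}
    (h : ∀ t, x t + x (t + R) = d) (j i : ℕ) :
    x ((j * R + i : ℕ) : Fin n) = if j % 2 = 0 then x i else d - x i := by
  induction j with
  | zero => simp
  | succ j ih =>
    have hj := h ((j * R + i : ℕ) : Fin n)
    rw [ih, show ((j * R + i : ℕ) : Fin n) + R = ((j + 1) * R + i : ℕ) by push_cast; ring] at hj
    rcases Nat.mod_two_eq_zero_or_one j with hj2 | hj2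
    · rw [if_pos hj2] at hj
      rw [if_neg (by omega)]
      linarith
    · rw [if_neg (by omega)] at hj
      rw [if_pos (by omega)]
      linarith

end

variable {Q R : ℕ} [NeZero (Q * R)]

theorem blk_eq_natCast (x : Fin (Q * R) → ℤ) (j : Fin Q) (i : Fin R) :
    blk Q R x j i = x ((j * R + i : ℕ) : Fin (Q * R)) := by
  rw [blk, Fin.natCast_eq_mk]

theorem forall_add_add_mul_eq_iff {P : ℕ} (hQ : Even Q) (hP : Odd P) (hPQ : P.Coprime Q)
    (x : Fin (Q * R) → ℤ) (c : ℤ) :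
    (∀ t, x t + x (t + (P * R : ℕ)) = c) ↔ ∀ t, x t + x (t + R) = c := by
  obtain ⟨u, rfl⟩ := hP
  have hshift : (((2 * u + 1) * R : ℕ) : Fin (Q * R)) = R + u * (R + R) := by push_cast; ring
  refine ⟨fun h t => ?_, fun h t => ?_⟩
  · have hgcd : (Q * R).gcd ((2 * u + 1) * R + (2 * u + 1) * R) = R + R := by
      obtain ⟨Q', rfl⟩ := hQ
      have hPQ' : Q'.Coprime (2 * u + 1) :=
        (hPQ.coprime_dvd_right (Dvd.intro_left 2 (two_mul Q'))).symm
      rw [← add_mul, Nat.gcd_mul_right, ← two_mul, ← two_mul, Nat.gcd_mul_left, hPQ']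
      ring
    have h2PR := Periodic.of_add_add_eq h
    rw [← Nat.cast_add] at h2PR
    have h2R := h2PR.natCast_gcd
    rw [hgcd, Nat.cast_add] at h2R
    rw [← h t, hshift, ← add_assoc, (h2R.nat_mul u) (t + R)]
  · rw [hshift, ← add_assoc, ((Periodic.of_add_add_eq h).nat_mul u) (t + R), h]

theorem add_add_eq_of_blk_eq_ite (hQ : Even Q) {x : Fin (Q * R) → ℤ} {a : Fin R → ℤ} {d : ℤ}
    (h : ∀ j i, blk Q R x j i = if (j : ℕ) % 2 = 0 then a i else d - a i) (t : Fin (Q * R)) :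
    x t + x (t + R) = d := by
  have hQ0 : 0 < Q := Nat.pos_of_ne_zero (left_ne_zero_of_mul (NeZero.ne (Q * R)))
  have hR0 : 0 < R := Nat.pos_of_ne_zero (right_ne_zero_of_mul (NeZero.ne (Q * R)))
  have hx : ∀ (j : ℕ) (i : Fin R),
      x ((j * R + i : ℕ) : Fin (Q * R)) = if j % 2 = 0 then a i else d - a i := by
    intro j i
    have hmod : ((j * R + i : ℕ) : Fin (Q * R)) = ((j % Q * R + i : ℕ) : Fin (Q * R)) :=
      Fin.ext (((Nat.mod_modEq j Q).symm.mul_right' R).add_right i)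
    rw [hmod, ← blk_eq_natCast x ⟨j % Q, Nat.mod_lt _ hQ0⟩, h, Nat.mod_mod_of_dvd _ hQ.two_dvd]
  obtain ⟨j, i, rfl⟩ : ∃ (j : ℕ) (i : Fin R), t = ((j * R + i : ℕ) : Fin (Q * R)) :=
    ⟨t / R, ⟨t % R, Nat.mod_lt _ hR0⟩, by rw [Nat.div_add_mod', Fin.cast_val_eq_self]⟩
  rw [show ((j * R + i : ℕ) : Fin (Q * R)) + R = ((j + 1) * R + i : ℕ) by push_cast; ring, hx, hx]
  rcases Nat.mod_two_eq_zero_or_one j with hj | hj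
  · rw [if_pos hj, if_neg (by omega)]
    ring
  · rw [if_neg (by omega), if_pos (by omega)]
    ring

theorem iterate_twist_eq_self_iff_exists_blk {P : ℕ} (hQ : Even Q) (hR : Odd R) (hP : Odd P)
    (hPQ : P.Coprime Q) (x : Fin (Q * R) → ℤ) :
    (twist (Q * R))^[P * R] x = x ↔
      ∃ a : Fin R → ℤ, ∀ j i, blk Q R x j i = if (j : ℕ) % 2 = 0 then a i else tau R a i := by
  rw [iterate_twist_eq_self_iff (hP.mul hR), forall_add_add_mul_eq_iff hQ hP hPQ]
  have hconst : ∀ d, (∀ t, x t + x (t + R) = d) →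
      (2 * ∑ l ∈ range (P * R), (-1) ^ l * x l = d ↔
        d = 2 * delta R (fun i => x ((i : ℕ) : Fin (Q * R)))) := by
    intro d h
    rw [delta, Fin.sum_univ_eq_sum_range (fun l => (-1) ^ l * x l)]
    exact two_mul_sum_range_mul_eq_iff hP hR (fun l => by push_cast; exact h l)
  constructor
  · intro h
    refine ⟨fun i => x ((i : ℕ) : Fin (Q * R)), fun j i => ?_⟩
    rw [blk_eq_natCast, natCast_mul_add_eq_ite h, tau, ← (hconst _ h).1 rfl]
    split_ifs <;> ring
  · rintro ⟨a, ha⟩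
    have hd := add_add_eq_of_blk_eq_ite hQ (d := 2 * delta R a) fun j i => by
      rw [ha, tau]
      split_ifs <;> ring
    have hQ0 : 0 < Q := Nat.pos_of_ne_zero (left_ne_zero_of_mul (NeZero.ne (Q * R)))
    have ha0 : (fun i : Fin R => x ((i : ℕ) : Fin (Q * R))) = a := by
      ext i
      simpa using (blk_eq_natCast x ⟨0, hQ0⟩ i).symm.trans (ha ⟨0, hQ0⟩ i)
    intro t
    rw [(hconst _ hd).2 (by rw [ha0])]
    exact hd t

end CyclicIndices

theorem stmt_7_general (p q r : ℤ) (hgcd : Int.gcd p q = 1)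
    (hq1 : 1 ≤ q) (hro : Odd r) (hqe : Even q)
    (Q R m : ℕ) (hQ : (Q : ℤ) = q) (hR : (R : ℤ) = r) (hm : (m : ℤ) = |p| * r)
    (x : Fin (Q * R) → ℤ) :
    (twist (Q * R))^[m] x = x ↔
      ∃ a : Fin R → ℤ, ∀ (j : Fin Q) (i : Fin R),
        blk Q R x j i = if (j : ℕ) % 2 = 0 then a i else tau R a i := by
  subst hQ hR
  have hQ : Even Q := (Int.even_coe_nat Q).1 hqe
  have hR : Odd R := (Int.odd_coe_nat R).1 hro
  have hPQ : p.natAbs.Coprime Q := hgcd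
  have hm' : m = p.natAbs * R := by
    zify
    exact hm
  have : NeZero (Q * R) := ⟨Nat.mul_ne_zero (by omega) hR.pos.ne'⟩
  subst hm'
  exact iterate_twist_eq_self_iff_exists_blk hQ hR
    (hPQ.coprime_dvd_right hQ.two_dvd).odd_of_right hPQ x

theorem stmt_7 (p q r : ℤ) (hp : p ≠ 0) (hgcd : Int.gcd p q = 1)
    (hq1 : 1 ≤ q) (hqp : q ≤ |p|) (hr2 : 2 ≤ r) (hro : Odd r) (hqe : Even q)
    (Q R m : ℕ) (hQ : (Q : ℤ) = q) (hR : (R : ℤ) = r) (hm : (m : ℤ) = |p| * r)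
    (x : Fin (Q * R) → ℤ) :
    (twist (Q * R))^[m] x = x ↔
      ∃ a : Fin R → ℤ, ∀ (j : Fin Q) (i : Fin R),
        blk Q R x j i = if (j : ℕ) % 2 = 0 then a i else tau R a i :=
  stmt_7_general p q r hgcd hq1 hro hqe Q R m hQ hR hm x
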